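/- (Generalized Singleton bound for sum-rank metric codes.) Let C be an [n,k;n_1,…,n_ℓ] sum-rank metric code over (F;K_1,…,K_ℓ) with k > 0. Then for every i = 1,…,k, the i-th generalized sum-rank weight satisfies d_{SR,i}(C) ≤ n − k + i. -/

import Mathlib

open Module

/-! Setup for sum-rank metric codes and sum-matroids.

We fix `ℓ` finite fields `K i` with a common extension `F` (given by algebra
structures), and block lengths `nv i`.  The ambient space `F^n` (with
`n = ∑ i, nv i`) is modelled as the dependent product of the blocks `F^{nv i}`,
and an element of the product lattice `P(K^n)` is a tuple of `K i`-subspaces of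
`K i ^ (nv i)`. -/

/-- The ambient space `F^n`, split into `ℓ` blocks of sizes `nv i`. -/
abbrev SRAmb (ℓ : ℕ) (nv : Fin ℓ → ℕ) (F : Type) : Type :=
  (i : Fin ℓ) → Fin (nv i) → F

/-- The product lattice `P(K^n)`: tuples `L` where `L i` is a `K i`-subspace of
`K i ^ (nv i)`. -/
abbrev SRLat (ℓ : ℕ) (nv : Fin ℓ → ℕ) (K : Fin ℓ → Type) [∀ i, Field (K i)] : Type :=
  (i : Fin ℓ) → Submodule (K i) (Fin (nv i) → K i)

variable {ℓ : ℕ} {nv : Fin ℓ → ℕ} {F : Type} [Field F]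
  {K : Fin ℓ → Type} [∀ i, Field (K i)] [∀ i, Algebra (K i) F]

/-- `Rk(L) = ∑ i, dim_{K i} (L i)`. -/
noncomputable def SRrk (L : SRLat ℓ nv K) : ℕ := ∑ i, finrank (K i) (L i)

/-- Orthogonal complement of a subspace of `k^m` with respect to the standard
dot product. -/
def SRorth {k : Type} [Field k] {m : ℕ} (W : Submodule k (Fin m → k)) :
    Submodule k (Fin m → k) where
  carrier := {v | ∀ w ∈ W, ∑ t, v t * w t = 0}
  zero_mem' := by intro w hw; simp
  add_mem' := by
    intro a b ha hb w hw
    have h : ∑ t, (a + b) t * w t = (∑ t, a t * w t) + ∑ t, b t * w t := by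
      simp [add_mul, Finset.sum_add_distrib]
    rw [h, ha w hw, hb w hw, add_zero]
  smul_mem' := by
    intro c a ha w hw
    have h : ∑ t, (c • a) t * w t = c * ∑ t, a t * w t := by
      simp [Finset.mul_sum, mul_assoc]
    rw [h, ha w hw, mul_zero]

/-- Componentwise orthogonal complement `L^⊥` in the lattice `P(K^n)`. -/
def SRlatPerp (L : SRLat ℓ nv K) : SRLat ℓ nv K := fun i => SRorth (L i)

/-- The `i`-th component of the sum-rank support of `c ∈ F^n`: the `K i`-row
space of the coordinate matrix of the `i`-th block of `c` (described
basis-freely as the span of the images of the block of `c` under all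
`K i`-linear functionals `F → K i`). -/
def SRsupp (c : SRAmb ℓ nv F) (i : Fin ℓ) : Submodule (K i) (Fin (nv i) → K i) :=
  Submodule.span (K i) {v | ∃ f : F →ₗ[K i] K i, v = fun t => f (c i t)}

/-- The sum-rank weight `srank(c) = Rk(supp(c))`. -/
noncomputable def SRwt (c : SRAmb ℓ nv F) : ℕ :=
  ∑ i, finrank (K i) (SRsupp (K := K) c i)

/-- The sum-rank support space `V_L = {c ∈ F^n : supp(c) ⊆ L}`. -/
def SRVL (L : SRLat ℓ nv K) : Submodule F (SRAmb ℓ nv F) where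
  carrier := {c | ∀ i, SRsupp (K := K) c i ≤ L i}
  zero_mem' := by
    intro i
    apply Submodule.span_le.mpr
    rintro v ⟨f, rfl⟩
    have h : (fun t => f ((0 : SRAmb ℓ nv F) i t)) = (0 : Fin (nv i) → K i) := by
      funext t; simp
    rw [h]
    exact (L i).zero_mem
  add_mem' := by
    intro a b ha hb i
    apply Submodule.span_le.mpr
    rintro v ⟨f, rfl⟩
    have h : (fun t => f ((a + b) i t)) =
        (fun t => f (a i t)) + fun t => f (b i t) := by
      funext t; simp
    rw [h]
    exact (L i).add_mem (ha i (Submodule.subset_span ⟨f, rfl⟩))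
      (hb i (Submodule.subset_span ⟨f, rfl⟩))
  smul_mem' := by
    intro x a ha i
    apply Submodule.span_le.mpr
    rintro v ⟨f, rfl⟩
    have h : (fun t => f ((x • a) i t)) =
        fun t => (f.comp (LinearMap.mulLeft (K i) x)) (a i t) := by
      funext t; simp [smul_eq_mul]
    rw [h]
    exact ha i (Submodule.subset_span ⟨_, rfl⟩)

/-- The dual code `C^⊥` with respect to the standard bilinear form on `F^n`. -/
def SRdual (C : Submodule F (SRAmb ℓ nv F)) : Submodule F (SRAmb ℓ nv F) where
  carrier := {x | ∀ c ∈ C, ∑ i, ∑ t, x i t * c i t = 0}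
  zero_mem' := by intro c hc; simp
  add_mem' := by
    intro a b ha hb c hc
    have h : ∑ i, ∑ t, (a + b) i t * c i t =
        (∑ i, ∑ t, a i t * c i t) + ∑ i, ∑ t, b i t * c i t := by
      simp [add_mul, Finset.sum_add_distrib]
    rw [h, ha c hc, hb c hc, add_zero]
  smul_mem' := by
    intro x a ha c hc
    have h : ∑ i, ∑ t, (x • a) i t * c i t = x * ∑ i, ∑ t, a i t * c i t := by
      simp [Finset.mul_sum, mul_assoc]
    rw [h, ha c hc, mul_zero]

/-- `C(L) = {c ∈ C^⊥ : supp(c) ⊆ L^⊥} = C^⊥ ∩ V_{L^⊥}`. -/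
def SRCL (C : Submodule F (SRAmb ℓ nv F)) (L : SRLat ℓ nv K) :
    Submodule F (SRAmb ℓ nv F) :=
  SRdual C ⊓ SRVL (SRlatPerp L)

/-- The projection `Π_L : F^n → F^{Rk L}`, `x ↦ x Aᵀ`, where
`A = diag(A_1, …, A_ℓ)` and `A_i` is the matrix whose rows are the chosen basis
of `L i` over `K i`.  The target `F^{Rk L}` is indexed blockwise. -/
noncomputable def SRpi (L : SRLat ℓ nv K) :
    SRAmb ℓ nv F →ₗ[F] ((i : Fin ℓ) → Fin (finrank (K i) (L i)) → F) where
  toFun x := fun i j =>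
    ∑ t, x i t * algebraMap (K i) F ((Module.finBasis (K i) (L i) j).val t)
  map_add' x y := by
    funext i j
    simp [add_mul, Finset.sum_add_distrib]
  map_smul' a x := by
    funext i j
    simp [Finset.mul_sum, mul_assoc]

/-- The rank function `ρ_C(L) = dim_F Π_L(C^⊥)` of the sum-matroid associated
to the code `C`. -/
noncomputable def SRrho (C : Submodule F (SRAmb ℓ nv F)) (L : SRLat ℓ nv K) : ℕ :=
  finrank F (Submodule.map (SRpi (F := F) L) (SRdual C))

/-- Minimum sum-rank distance of a code. -/
noncomputable def SRminDist (K : Fin ℓ → Type) [∀ i, Field (K i)]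
    [∀ i, Algebra (K i) F] (C : Submodule F (SRAmb ℓ nv F)) : ℕ :=
  sInf {w | ∃ c ∈ C, c ≠ 0 ∧ SRwt (K := K) c = w}

/-- The `r`-th generalized sum-rank weight
`d_{SR,r}(C) = min{Rk L : dim_F (C ∩ V_L) ≥ r}`. -/
noncomputable def SRdgw (K : Fin ℓ → Type) [∀ i, Field (K i)]
    [∀ i, Algebra (K i) F] (C : Submodule F (SRAmb ℓ nv F)) (r : ℕ) : ℕ :=
  sInf {w | ∃ L : SRLat ℓ nv K, r ≤ finrank F ↥(C ⊓ SRVL L) ∧ SRrk L = w}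

/-- The sum-matroid axioms (R1), (R2), (R3) for a function `ρ : P(K^n) → ℕ`. -/
def IsSumMatroid (ρ : SRLat ℓ nv K → ℕ) : Prop :=
  (∀ L, ρ L ≤ SRrk L) ∧
  (∀ L L' : SRLat ℓ nv K, L ≤ L' → ρ L ≤ ρ L') ∧
  (∀ L L' : SRLat ℓ nv K, ρ (L ⊔ L') + ρ (L ⊓ L') ≤ ρ L + ρ L')

/-- The dual rank function `ρ*(L) = ρ(L^⊥) + Rk L − ρ(K^n)`. -/
noncomputable def SRdualRk (ρ : SRLat ℓ nv K → ℕ) (L : SRLat ℓ nv K) : ℕ :=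
  ρ (SRlatPerp L) + SRrk L - ρ ⊤

/-- The nullity function `η(L) = Rk L − ρ(L)`. -/
noncomputable def SReta (ρ : SRLat ℓ nv K → ℕ) (L : SRLat ℓ nv K) : ℕ :=
  SRrk L - ρ L

/-- The `i`-th generalized weight of a sum-matroid,
`d_i(M) = min{Rk L : η(L) = i}`. -/
noncomputable def SRgw (ρ : SRLat ℓ nv K → ℕ) (i : ℕ) : ℕ :=
  sInf {w | ∃ L : SRLat ℓ nv K, SReta ρ L = i ∧ SRrk L = w}

/-! Choose `n - k + r` coordinate positions. The lattice element `L` of coordinate subspaces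
they span has `Rk L = n - k + r`, and the `F`-space of vectors supported on these positions lies
in `V_L` and has the same dimension, so by the dimension formula it meets `C` in dimension at
least `k + (n - k + r) - n = r`. -/

theorem Submodule.finrank_add_finrank_le_finrank_inf_add {K V : Type*} [DivisionRing K]
    [AddCommGroup V] [Module K V] [FiniteDimensional K V] (p q : Submodule K V) :
    finrank K p + finrank K q ≤ finrank K ↥(p ⊓ q) + finrank K V := by
  rw [← Submodule.finrank_sup_add_finrank_inf_eq, add_comm]
  exact Nat.add_le_add_left (Submodule.finrank_le _) _

theorem Finset.exists_sum_card_eq {ι : Type*} [Fintype ι] {α : ι → Type*}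
    [∀ i, Fintype (α i)] {m : ℕ} (hm : m ≤ ∑ i, Fintype.card (α i)) :
    ∃ S : ∀ i, Finset (α i), ∑ i, (S i).card = m := by
  classical
  obtain ⟨T, -, hT⟩ := Finset.exists_subset_card_eq (s := (univ : Finset (Σ i, α i)))
    (by simpa using hm)
  refine ⟨fun i => T.preimage (Sigma.mk i) sigma_mk_injective.injOn, ?_⟩
  rw [← Finset.card_sigma, ← hT]
  congr
  ext ⟨i, t⟩
  simp

section
variable (k : Type) [Field k] {m : Type}

def vanishingOff (s : Set m) : Submodule k (m → k) :=
  ⨅ t ∈ sᶜ, LinearMap.ker (LinearMap.proj t)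

variable {k}

theorem mem_vanishingOff {s : Set m} {v : m → k} :
    v ∈ vanishingOff k s ↔ ∀ t ∉ s, v t = 0 := by
  simp [vanishingOff]

theorem finrank_vanishingOff [Fintype m] (s : Finset m) :
    finrank k (vanishingOff k (s : Set m)) = s.card := by
  classical
  rw [vanishingOff,
    (LinearMap.iInfKerProjEquiv k (fun _ => k) disjoint_compl_right (by simp)).finrank_eq,
    finrank_fintype_fun_eq_card]
  simp

end

theorem finrank_SRAmb : finrank F (SRAmb ℓ nv F) = ∑ i, nv i := by
  simp [SRAmb, Module.finrank_pi_fintype]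

section
variable (S : ∀ i, Finset (Fin (nv i)))

variable (K) in
def coordLat : SRLat ℓ nv K :=
  fun i => vanishingOff (K i) (S i)

theorem SRrk_coordLat : SRrk (coordLat K S) = ∑ i, (S i).card :=
  Finset.sum_congr rfl fun i _ => finrank_vanishingOff (S i)

variable (F) in
def coordSubspace : Submodule F (SRAmb ℓ nv F) :=
  (vanishingOff F (Finset.univ.sigma S : Set (Σ i, Fin (nv i)))).map
    (LinearEquiv.piCurry F fun _ _ => F).toLinearMap

variable {S} in
theorem mem_coordSubspace {c : SRAmb ℓ nv F} :
    c ∈ coordSubspace F S ↔ ∀ i, ∀ t ∉ S i, c i t = 0 := by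
  simp [coordSubspace, Submodule.mem_map_equiv, mem_vanishingOff, Sigma.forall, Sigma.uncurry]

theorem finrank_coordSubspace : finrank F (coordSubspace F S) = ∑ i, (S i).card := by
  rw [coordSubspace, LinearEquiv.finrank_map_eq, finrank_vanishingOff, Finset.card_sigma]

theorem coordSubspace_le_SRVL : coordSubspace F S ≤ SRVL (coordLat K S) := by
  intro c hc i
  rw [SRsupp, Submodule.span_le]
  rintro _ ⟨f, rfl⟩
  exact mem_vanishingOff.2 fun t ht => by simp [mem_coordSubspace.1 hc i t ht]

end

theorem stmt19_singleton_bound_general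
    {ℓ : ℕ} {nv : Fin ℓ → ℕ}
    {F : Type} [Field F]
    {K : Fin ℓ → Type} [∀ i, Field (K i)]
    [∀ i, Algebra (K i) F]
    (C : Submodule F (SRAmb ℓ nv F)) (k : ℕ) (hk : Module.finrank F C = k)
    (r : ℕ) (hr2 : r ≤ k) :
    SRdgw K C r ≤ (∑ i, nv i) - k + r := by
  have hkn : k ≤ ∑ i, nv i := hk ▸ finrank_SRAmb (F := F) ▸ Submodule.finrank_le C
  obtain ⟨S, hS⟩ := Finset.exists_sum_card_eq (α := fun i => Fin (nv i))
    (m := (∑ i, nv i) - k + r) (by simp only [Fintype.card_fin]; omega)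
  have hdim := Submodule.finrank_add_finrank_le_finrank_inf_add C (coordSubspace F S)
  rw [hk, finrank_coordSubspace, hS, finrank_SRAmb] at hdim
  refine Nat.sInf_le ⟨coordLat K S, ?_, by rw [SRrk_coordLat, hS]⟩
  calc r ≤ finrank F ↥(C ⊓ coordSubspace F S) := by omega
    _ ≤ finrank F ↥(C ⊓ SRVL (coordLat K S)) :=
      Submodule.finrank_mono (inf_le_inf_left C (coordSubspace_le_SRVL S))

/-- Generalized Singleton bound for sum-rank metric codes:
For an `[n,k]` sum-rank metric code `C` with `k > 0` and `1 ≤ i ≤ k`,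
`d_{SR,i}(C) ≤ n − k + i`. -/
theorem stmt19_singleton_bound
    {ℓ : ℕ} (hℓ : 0 < ℓ) {nv : Fin ℓ → ℕ} (hnv : ∀ i, 0 < nv i)
    {F : Type} [Field F] [Finite F]
    {K : Fin ℓ → Type} [∀ i, Field (K i)] [∀ i, Finite (K i)]
    [∀ i, Algebra (K i) F] [∀ i, FiniteDimensional (K i) F]
    (C : Submodule F (SRAmb ℓ nv F)) (k : ℕ) (hk : Module.finrank F C = k)
    (hk0 : 0 < k) (r : ℕ) (hr1 : 1 ≤ r) (hr2 : r ≤ k) :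
    SRdgw K C r ≤ (∑ i, nv i) - k + r :=
  stmt19_singleton_bound_general C k hk r hr2
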